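/- arXiv:1405.4809 — 2 statements merged into one kernel-verified Lean document; each statement's English description precedes it below -/
import Mathlib

section
/- Let f : X → (-∞,+∞] be a c-antiderivative of a multivalued mapping M : X ⇉ Y, and let S be a nonempty subset of dom(M). If h : X → (-∞,+∞] is c-convex, then h ∈ 𝒜_{[c,f|_S,M]} if and only if h^c ∈ 𝒜_{[c,f^c|_{M(S)},M⁻¹]}. -/
noncomputable section

open scoped Classical

variable {X Y : Type*}

/-- The `c`-transform of `f : X → EReal`, a function on `Y`:
`f^c(y) = sup_{x ∈ X} (c(x,y) - f(x))`. The `c`-transform of a function on `Y` is obtained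
by applying this to the swapped coupling `fun y x => c x y`. -/
def cTransform (c : X → Y → ℝ) (f : X → EReal) : Y → EReal :=
  fun y => ⨆ x, ((c x y : EReal) - f x)

/-- `f` is proper: it takes no value `-∞` (i.e. maps into `(-∞, +∞]`) and is finite somewhere. -/
def ProperFn (f : X → EReal) : Prop :=
  (∀ x, f x ≠ ⊥) ∧ ∃ x, f x ≠ ⊤

/-- `f` is `c`-convex: it is proper and is the `c`-transform of some proper
`g : Y → (-∞, +∞]`. -/
def IsCConvex (c : X → Y → ℝ) (f : X → EReal) : Prop :=
  ProperFn f ∧ ∃ g : Y → EReal, ProperFn g ∧ f = cTransform (fun y x => c x y) g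

/-- The `c`-subdifferential of `f`:
`∂_c f(x) = { y | ∀ x', f(x) + c(x',y) ≤ f(x') + c(x,y) }`. -/
def cSubdiff (c : X → Y → ℝ) (f : X → EReal) (x : X) : Set Y :=
  { y | ∀ x', f x + (c x' y : EReal) ≤ f x' + (c x y : EReal) }

/-- The domain of a multivalued mapping `M : X ⇉ Y`. -/
def mapDom (M : X → Set Y) : Set X := { x | (M x).Nonempty }

/-- The inverse multivalued mapping `M⁻¹ : Y ⇉ X`. -/
def mapInv (M : X → Set Y) : Y → Set X := fun y => { x | y ∈ M x }

/-- The image `M(S) = ⋃_{s ∈ S} M(s)` of a set `S` under a multivalued mapping. -/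
def mapImageOn (M : X → Set Y) (S : Set X) : Set Y := { y | ∃ s ∈ S, y ∈ M s }

/-- The image `Im(M) = ⋃_{x ∈ X} M(x)` of a multivalued mapping. -/
def mapIm (M : X → Set Y) : Set Y := { y | ∃ x, y ∈ M x }

/-- `f` is a `c`-antiderivative of `M`: `f` is proper and `G(M) ⊆ G(∂_c f)`. -/
def IsCAntiderivative (c : X → Y → ℝ) (f : X → EReal) (M : X → Set Y) : Prop :=
  ProperFn f ∧ ∀ x y, y ∈ M x → y ∈ cSubdiff c f x

/-- The family `𝒜_{[c, f|_S, M]}` of all `c`-convex `c`-antiderivatives of `M`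
which coincide with `f` on `S`. -/
def cFamily (c : X → Y → ℝ) (f : X → EReal) (S : Set X) (M : X → Set Y) :
    Set (X → EReal) :=
  { h | IsCConvex c h ∧ (∀ x y, y ∈ M x → y ∈ cSubdiff c h x) ∧ ∀ s ∈ S, h s = f s }

/-- The upper envelope `γ_{[c, f|_S, M]}`. -/
def upperEnv (c : X → Y → ℝ) (f : X → EReal) (S : Set X) (M : X → Set Y) : X → EReal :=
  fun x => ⨆ h ∈ cFamily c f S M, h x

/-- The lower envelope `α_{[c, f|_S, M]}`. -/
def lowerEnv (c : X → Y → ℝ) (f : X → EReal) (S : Set X) (M : X → Set Y) : X → EReal :=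
  fun x => ⨅ h ∈ cFamily c f S M, h x

/-- The indicator function `ι_A` (0 on `A`, `+∞` off `A`). -/
def indicatorE (A : Set X) : X → EReal := fun x => if x ∈ A then 0 else ⊤

/-- Rockafellar's function `R_{[c,M,s]}`: the supremum over `n ≥ 1` and chains
`x_1 = s`, `x_{n+1} = x`, `{(x_i, y_i)}_{i=1}^n ⊆ G(M)` of
`Σ_{i=1}^n [c(x_{i+1}, y_i) - c(x_i, y_i)]` (0-indexed below). -/
def rockafellar (c : X → Y → ℝ) (M : X → Set Y) (s : X) : X → EReal := fun x =>
  ⨆ (n : ℕ) (_ : 0 < n) (xs : ℕ → X) (ys : ℕ → Y)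
      (_ : xs 0 = s ∧ ∀ i < n, ys i ∈ M (xs i)),
    (((∑ i ∈ Finset.range n,
        (c (if i + 1 < n then xs (i + 1) else x) (ys i) - c (xs i) (ys i))) : ℝ) : EReal)

/-- `M` is cyclically monotone of order `n` with respect to `c`: for any `n` pairs
`{(x_i, y_i)}_{i=1}^n ⊆ G(M)`, setting `x_{n+1} = x_1`,
`0 ≤ Σ_{i=1}^n [c(x_i,y_i) - c(x_{i+1},y_i)]` (0-indexed below, cyclically). -/
def IsNCMonotone (c : X → Y → ℝ) (M : X → Set Y) (n : ℕ) : Prop :=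
  ∀ (xs : ℕ → X) (ys : ℕ → Y), (∀ i < n, ys i ∈ M (xs i)) →
    0 ≤ ∑ i ∈ Finset.range n, (c (xs i) (ys i) - c (xs ((i + 1) % n)) (ys i))

/-- `M` is `c`-cyclically monotone: `n`-`c`-monotone for all `n`. -/
def IsCCyclicallyMonotone (c : X → Y → ℝ) (M : X → Set Y) : Prop :=
  ∀ n : ℕ, IsNCMonotone c M n

/-!
If `y ∈ ∂_c f(x)` then `f(x)` is finite and the Fenchel–Young inequality
`f(x) + f^c(y) ≥ c(x,y)` is an equality; equivalently `x ∈ ∂_c f^c(y)`. Hence `f ↦ f^c`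
carries `c`-antiderivatives of `M` to `c`-antiderivatives of `M⁻¹`, and at a point
`y ∈ ∂_c f(x) ∩ ∂_c h(x)` we have `f^c(y) = h^c(y)` iff `f(x) = h(x)`. Since `h^{cc} = h`
for `c`-convex `h`, both directions of the equivalence follow.
-/

variable {c : X → Y → ℝ} {f h : X → EReal} {x : X} {y : Y}

lemma ProperFn.ne_top_of_mem_cSubdiff (hf : ProperFn f) (hy : y ∈ cSubdiff c f x) :
    f x ≠ ⊤ := by
  obtain ⟨-, x₀, hx₀⟩ := hf
  intro htop
  have h₀ := hy x₀
  rw [htop, EReal.top_add_coe, top_le_iff] at h₀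
  exact EReal.add_ne_top hx₀ (EReal.coe_ne_top _) h₀

lemma ProperFn.exists_coe (hf : ProperFn f) (hx : f x ≠ ⊤) : ∃ r : ℝ, f x = r :=
  ⟨(f x).toReal, (EReal.coe_toReal hx (hf.1 x)).symm⟩

lemma ProperFn.exists_coe_of_mem_cSubdiff (hf : ProperFn f) (hy : y ∈ cSubdiff c f x) :
    ∃ r : ℝ, f x = r :=
  hf.exists_coe (hf.ne_top_of_mem_cSubdiff hy)

lemma le_cTransform (c : X → Y → ℝ) (f : X → EReal) (x : X) (y : Y) :
    (c x y : EReal) - f x ≤ cTransform c f y :=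
  le_iSup (fun x' => (c x' y : EReal) - f x') x

lemma cTransform_eq_of_mem_cSubdiff (hf : ProperFn f) (hy : y ∈ cSubdiff c f x) :
    cTransform c f y = c x y - f x := by
  obtain ⟨r, hr⟩ := hf.exists_coe_of_mem_cSubdiff hy
  refine le_antisymm (iSup_le fun x' => ?_) (le_cTransform c f x y)
  rcases eq_or_ne (f x') ⊤ with htop | htop
  · simp [htop]
  obtain ⟨r', hr'⟩ := hf.exists_coe htop
  have hineq := hy x'
  rw [hr, hr'] at hineq ⊢
  norm_cast at hineq ⊢
  linarith

lemma cTransform_eq_cTransform_iff (hf : ProperFn f) (hh : ProperFn h)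
    (hyf : y ∈ cSubdiff c f x) (hyh : y ∈ cSubdiff c h x) :
    cTransform c f y = cTransform c h y ↔ f x = h x := by
  obtain ⟨r, hr⟩ := hf.exists_coe_of_mem_cSubdiff hyf
  obtain ⟨s, hs⟩ := hh.exists_coe_of_mem_cSubdiff hyh
  rw [cTransform_eq_of_mem_cSubdiff hf hyf, cTransform_eq_of_mem_cSubdiff hh hyh, hr, hs]
  norm_cast
  exact sub_right_inj

lemma mem_cSubdiff_cTransform (hf : ProperFn f) (hy : y ∈ cSubdiff c f x) :
    x ∈ cSubdiff (fun y x => c x y) (cTransform c f) y := by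
  obtain ⟨r, hr⟩ := hf.exists_coe_of_mem_cSubdiff hy
  intro y'
  have hy' := le_cTransform c f x y'
  rw [hr] at hy'
  rw [cTransform_eq_of_mem_cSubdiff hf hy, hr]
  calc ((c x y : EReal) - r) + c x y' = ((c x y' : EReal) - r) + c x y := by
        norm_cast; ring
    _ ≤ cTransform c f y' + c x y := add_le_add_left hy' _

lemma cTransform_cTransform_le (hx : f x ≠ ⊥) :
    cTransform (fun y x => c x y) (cTransform c f) x ≤ f x := by
  refine iSup_le fun y => ?_
  rcases eq_or_ne (f x) ⊤ with htop | htop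
  · simp [htop]
  exact EReal.sub_le_of_le_add'
    ((EReal.sub_le_iff_le_add (.inl hx) (.inl htop)).1 (le_cTransform c f x y))

lemma cTransform_antitone {g : X → EReal} (hfg : f ≤ g) : cTransform c g ≤ cTransform c f :=
  fun _ => iSup_mono fun x => EReal.sub_le_sub le_rfl (hfg x)

lemma IsCConvex.cTransform_cTransform (hh : IsCConvex c h) :
    cTransform (fun y x => c x y) (cTransform c h) = h := by
  obtain ⟨hp, g, hg, rfl⟩ := hh
  refine le_antisymm (fun x => cTransform_cTransform_le (hp.1 x)) (cTransform_antitone ?_)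
  exact fun y => cTransform_cTransform_le (c := fun y x => c x y) (hg.1 y)

lemma isCConvex_cTransform (hh : IsCConvex c h) :
    IsCConvex (fun y x => c x y) (cTransform c h) := by
  obtain ⟨hp, g, hg, hhg⟩ := hh
  obtain ⟨x, hx⟩ := hp.2
  obtain ⟨r, hr⟩ := hp.exists_coe hx
  obtain ⟨y₀, hy₀⟩ := hg.2
  refine ⟨⟨fun y => ne_bot_of_le_ne_bot ?_ (le_cTransform c h x y), y₀,
    ne_top_of_le_ne_top hy₀ ?_⟩, h, hp, rfl⟩
  · rw [hr, ← EReal.coe_sub]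
    exact EReal.coe_ne_bot _
  · rw [hhg]
    exact cTransform_cTransform_le (c := fun y x => c x y) (hg.1 y₀)

theorem statement4_general (c : X → Y → ℝ) (f : X → EReal)
    (M : X → Set Y) (hf : IsCAntiderivative c f M)
    (S : Set X) (hSdom : S ⊆ mapDom M)
    (h : X → EReal) (hconv : IsCConvex c h) :
    h ∈ cFamily c f S M ↔
      cTransform c h ∈
        cFamily (fun y x => c x y) (cTransform c f) (mapImageOn M S) (mapInv M) := by
  constructor
  · rintro ⟨-, hhM, hhS⟩
    refine ⟨isCConvex_cTransform hconv,
      fun y x hxy => mem_cSubdiff_cTransform hconv.1 (hhM x y hxy), ?_⟩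
    rintro y ⟨t, ht, hyt⟩
    exact (cTransform_eq_cTransform_iff hconv.1 hf.1 (hhM t y hyt) (hf.2 t y hyt)).2 (hhS t ht)
  · rintro ⟨hconv', hM', hS'⟩
    have hhM : ∀ x y, y ∈ M x → y ∈ cSubdiff c h x := fun x y hxy => by
      simpa only [hconv.cTransform_cTransform] using mem_cSubdiff_cTransform hconv'.1 (hM' y x hxy)
    refine ⟨hconv, hhM, fun s hs => ?_⟩
    obtain ⟨y, hys⟩ := hSdom hs
    exact (cTransform_eq_cTransform_iff hconv.1 hf.1 (hhM s y hys) (hf.2 s y hys)).1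
      (hS' y ⟨s, hs, hys⟩)

/-- If `h` is `c`-convex, then `h ∈ 𝒜_{[c,f|_S,M]}` iff
`h^c ∈ 𝒜_{[c, f^c|_{M(S)}, M⁻¹]}`. -/
theorem statement4 [Nonempty X] [Nonempty Y] (c : X → Y → ℝ) (f : X → EReal)
    (M : X → Set Y) (hf : IsCAntiderivative c f M)
    (S : Set X) (hS : S.Nonempty) (hSdom : S ⊆ mapDom M)
    (h : X → EReal) (hconv : IsCConvex c h) :
    h ∈ cFamily c f S M ↔
      cTransform c h ∈
        cFamily (fun y x => c x y) (cTransform c f) (mapImageOn M S) (mapInv M) :=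
  statement4_general c f M hf S hSdom h hconv
end
end

section
/- If M : X ⇉ Y is a proper, c-cyclically monotone multivalued mapping and s ∈ dom(M), then Rockafellar's function R_{[c,M,s]} is a proper, c-convex c-antiderivative of M which satisfies R_{[c,M,s]}(s) = 0. -/
noncomputable section

open scoped Classical

variable {X Y : Type*}

/-!
Along any admissible chain from `s`, appending one more pair `(z, y)` of the graph of `M`
raises the chain value by `c(x, y) - c(z, y)`; taking suprema gives
`R(z) + c(x, y) - c(z, y) ≤ R(x)` for `y ∈ M z`, i.e. `G(M) ⊆ G(∂_c R)`. Closing a chain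
back at `s` gives a non-positive value by cyclic monotonicity, so `R(s) = 0`, and then `R` is
finite on `dom M`. There the subdifferential inequality is an equality for the `c`-transform:
`R^c(y) = c(z, y) - R(z)`. Splitting off the last pair of a chain then bounds `R` by
`sup_y (c(x, y) - R^c(y))`, and the reverse inequality holds for every function, so `R` is
the `c`-transform of the proper function `R^c`.
-/

section CTransform

variable {c : X → Y → ℝ} {f : X → EReal}

theorem coe_sub_le_cTransform (x : X) (y : Y) : (c x y : EReal) - f x ≤ cTransform c f y :=
  le_iSup (fun x' => (c x' y : EReal) - f x') x

theorem coe_sub_cTransform_le (x : X) (y : Y) : (c x y : EReal) - cTransform c f y ≤ f x := by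
  have h := coe_sub_le_cTransform (c := c) (f := f) x y
  generalize f x = a at h ⊢
  induction a using EReal.rec with
  | bot => simp_all
  | coe r => exact EReal.sub_le_of_le_add' ((EReal.sub_le_iff_le_add (.inl (EReal.coe_ne_bot r))
      (.inl (EReal.coe_ne_top r))).1 h)
  | top => exact le_top

theorem cTransform_eq_of_mem_cSubdiff_s9 {z : X} {r : ℝ} (hz : f z = r) {y : Y}
    (hy : y ∈ cSubdiff c f z) : cTransform c f y = ((c z y - r : ℝ) : EReal) := by
  refine le_antisymm (iSup_le fun x' => ?_) (le_of_eq_of_le (by rw [hz]; rfl)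
    (coe_sub_le_cTransform z y))
  have hx' := hy x'
  rw [hz] at hx'
  generalize f x' = a at hx' ⊢
  induction a using EReal.rec with
  | bot => simp at hx'
  | coe q =>
    norm_cast at hx' ⊢
    linarith
  | top => simp

end CTransform

def chainSum (c : X → Y → ℝ) (xs : ℕ → X) (ys : ℕ → Y) (n : ℕ) (x : X) : ℝ :=
  ∑ i ∈ Finset.range n, (c (if i + 1 < n then xs (i + 1) else x) (ys i) - c (xs i) (ys i))

section ChainSum

variable {c : X → Y → ℝ} {xs : ℕ → X} {ys : ℕ → Y}

theorem chainSum_succ (n : ℕ) (x : X) :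
    chainSum c xs ys (n + 1) x = chainSum c xs ys n (xs n) + (c x (ys n) - c (xs n) (ys n)) := by
  rw [chainSum, Finset.sum_range_succ, if_neg (lt_irrefl _)]
  congr 1
  refine Finset.sum_congr rfl fun i hi => ?_
  rw [Finset.mem_range] at hi
  rw [if_pos (by omega)]
  split_ifs with h
  · rfl
  · rw [show n = i + 1 by omega]

theorem chainSum_update (n : ℕ) (x z : X) (y : Y) :
    chainSum c (Function.update xs n z) (Function.update ys n y) n x = chainSum c xs ys n x := by
  refine Finset.sum_congr rfl fun i hi => ?_
  rw [Finset.mem_range] at hi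
  split_ifs with h
  · simp [Function.update_of_ne, hi.ne, h.ne]
  · simp [Function.update_of_ne, hi.ne]

theorem chainSum_eq_neg_cyclic_sum (n : ℕ) :
    chainSum c xs ys n (xs 0) =
      -∑ i ∈ Finset.range n, (c (xs i) (ys i) - c (xs ((i + 1) % n)) (ys i)) := by
  rw [chainSum, ← Finset.sum_neg_distrib]
  refine Finset.sum_congr rfl fun i hi => ?_
  rw [Finset.mem_range] at hi
  split_ifs with h
  · rw [Nat.mod_eq_of_lt h, neg_sub]
  · rw [show i + 1 = n by omega, Nat.mod_self, neg_sub]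

end ChainSum

section Rockafellar

variable {c : X → Y → ℝ} {M : X → Set Y} {s : X}

theorem rockafellar_le {x : X} {b : EReal}
    (h : ∀ n, 0 < n → ∀ xs ys, xs 0 = s → (∀ i < n, ys i ∈ M (xs i)) →
      (chainSum c xs ys n x : EReal) ≤ b) :
    rockafellar c M s x ≤ b :=
  iSup₂_le fun n hn => iSup₂_le fun xs ys => iSup_le fun hc => h n hn xs ys hc.1 hc.2

theorem le_rockafellar {x : X} {n : ℕ} (hn : 0 < n) {xs : ℕ → X} {ys : ℕ → Y} (h0 : xs 0 = s)
    (hM : ∀ i < n, ys i ∈ M (xs i)) : (chainSum c xs ys n x : EReal) ≤ rockafellar c M s x :=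
  le_iSup₂_of_le n hn <| le_iSup₂_of_le xs ys <| le_iSup_of_le ⟨h0, hM⟩ le_rfl

theorem coe_sub_le_rockafellar {y : Y} (hy : y ∈ M s) (x : X) :
    ((c x y - c s y : ℝ) : EReal) ≤ rockafellar c M s x := by
  simpa [chainSum] using
    le_rockafellar (c := c) (x := x) one_pos (xs := fun _ => s) rfl fun _ _ => hy

theorem rockafellar_ne_bot (hs : s ∈ mapDom M) (x : X) : rockafellar c M s x ≠ ⊥ :=
  ne_bot_of_le_ne_bot (EReal.coe_ne_bot _) (coe_sub_le_rockafellar hs.some_mem x)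

theorem rockafellar_self_nonneg (hs : s ∈ mapDom M) : 0 ≤ rockafellar c M s s := by
  simpa using coe_sub_le_rockafellar (c := c) hs.some_mem s

theorem rockafellar_self (hcyc : IsCCyclicallyMonotone c M) (hs : s ∈ mapDom M) :
    rockafellar c M s s = 0 := by
  refine le_antisymm (rockafellar_le fun n _ xs ys h0 hM => ?_) (rockafellar_self_nonneg hs)
  rw [← h0, chainSum_eq_neg_cyclic_sum]
  exact_mod_cast neg_nonpos.2 (hcyc n xs ys hM)

theorem rockafellar_add_le {z : X} {y : Y} (hy : y ∈ M z) (x : X) :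
    rockafellar c M s z + ((c x y - c z y : ℝ) : EReal) ≤ rockafellar c M s x := by
  refine EReal.add_le_of_le_sub (rockafellar_le fun n hn xs ys h0 hM => ?_)
  have hext := chainSum_succ (c := c) (xs := Function.update xs n z)
    (ys := Function.update ys n y) n x
  simp only [Function.update_self, chainSum_update] at hext
  rw [EReal.le_sub_iff_add_le (.inl (EReal.coe_ne_bot _)) (.inl (EReal.coe_ne_top _)),
    ← EReal.coe_add, ← hext]
  refine le_rockafellar n.succ_pos (by rw [Function.update_of_ne hn.ne, h0]) fun i hi => ?_
  rcases (Nat.lt_succ_iff_lt_or_eq.1 hi) with hi | rfl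
  · simpa [Function.update_of_ne hi.ne] using hM i hi
  · simpa using hy

theorem mem_cSubdiff_rockafellar {z : X} {y : Y} (hy : y ∈ M z) :
    y ∈ cSubdiff c (rockafellar c M s) z := fun x' =>
  calc rockafellar c M s z + (c x' y : EReal)
      = rockafellar c M s z + ((c x' y - c z y : ℝ) : EReal) + (c z y : EReal) := by
        rw [add_assoc, ← EReal.coe_add, sub_add_cancel]
    _ ≤ rockafellar c M s x' + (c z y : EReal) := by gcongr; exact rockafellar_add_le hy x'

theorem rockafellar_ne_top (hcyc : IsCCyclicallyMonotone c M) (hs : s ∈ mapDom M) {z : X}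
    (hz : z ∈ mapDom M) : rockafellar c M s z ≠ ⊤ := by
  intro htop
  have h := rockafellar_add_le (c := c) (s := s) hz.some_mem s
  rw [rockafellar_self hcyc hs, htop, EReal.top_add_coe] at h
  simp at h

theorem rockafellar_le_iSup_graph (hs : s ∈ mapDom M) (x : X) :
    rockafellar c M s x ≤
      ⨆ (z : X) (y : Y) (_ : y ∈ M z), rockafellar c M s z + ((c x y - c z y : ℝ) : EReal) := by
  refine rockafellar_le fun n hn xs ys h0 hM => ?_
  obtain ⟨m, rfl⟩ := Nat.exists_eq_add_one_of_ne_zero hn.ne'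
  have hprefix : (chainSum c xs ys m (xs m) : EReal) ≤ rockafellar c M s (xs m) := by
    rcases m.eq_zero_or_pos with rfl | hm
    · simpa [chainSum, h0] using rockafellar_self_nonneg hs
    · exact le_rockafellar hm h0 fun i hi => hM i (by omega)
  refine le_iSup₂_of_le (xs m) (ys m) <| le_iSup_of_le (hM m m.lt_succ_self) ?_
  rw [chainSum_succ, EReal.coe_add]
  gcongr

theorem rockafellar_eq_cTransform_cTransform (hcyc : IsCCyclicallyMonotone c M)
    (hs : s ∈ mapDom M) :
    rockafellar c M s = cTransform (fun y x => c x y) (cTransform c (rockafellar c M s)) := by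
  funext x
  refine le_antisymm ((rockafellar_le_iSup_graph hs x).trans <| iSup₂_le fun z y => iSup_le
    fun hy => ?_) (iSup_le fun y => coe_sub_cTransform_le x y)
  obtain ⟨r, hr⟩ : ∃ r : ℝ, rockafellar c M s z = r :=
    ⟨_, (EReal.coe_toReal (rockafellar_ne_top hcyc hs ⟨y, hy⟩) (rockafellar_ne_bot hs z)).symm⟩
  calc rockafellar c M s z + ((c x y - c z y : ℝ) : EReal)
      = (c x y : EReal) - cTransform c (rockafellar c M s) y := by
        rw [cTransform_eq_of_mem_cSubdiff_s9 hr (mem_cSubdiff_rockafellar hy), hr]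
        norm_cast
        ring
    _ ≤ _ := le_iSup (fun y => (c x y : EReal) - cTransform c (rockafellar c M s) y) y

theorem properFn_cTransform_rockafellar (hcyc : IsCCyclicallyMonotone c M) (hs : s ∈ mapDom M) :
    ProperFn (cTransform c (rockafellar c M s)) := by
  refine ⟨fun y => ne_bot_of_le_ne_bot ?_ (coe_sub_le_cTransform s y), hs.some, ?_⟩
  · simp [rockafellar_self hcyc hs]
  · rw [cTransform_eq_of_mem_cSubdiff_s9 (r := 0) (by rw [rockafellar_self hcyc hs]; rfl)
      (mem_cSubdiff_rockafellar hs.some_mem)]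
    exact EReal.coe_ne_top _

end Rockafellar

theorem statement9_general (c : X → Y → ℝ) (M : X → Set Y)
    (hcyc : IsCCyclicallyMonotone c M)
    (s : X) (hs : s ∈ mapDom M) :
    ProperFn (rockafellar c M s) ∧
      IsCConvex c (rockafellar c M s) ∧
      IsCAntiderivative c (rockafellar c M s) M ∧
      rockafellar c M s s = 0 := by
  have hRs : rockafellar c M s s = 0 := rockafellar_self hcyc hs
  have hR : ProperFn (rockafellar c M s) :=
    ⟨rockafellar_ne_bot hs, s, by simp [hRs]⟩
  exact ⟨hR, ⟨hR, _, properFn_cTransform_rockafellar hcyc hs,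
    rockafellar_eq_cTransform_cTransform hcyc hs⟩, ⟨hR, fun _ _ => mem_cSubdiff_rockafellar⟩, hRs⟩

/-- If `M` is proper and `c`-cyclically monotone and `s ∈ dom M`, then
Rockafellar's function `R_{[c,M,s]}` is a proper `c`-convex `c`-antiderivative of `M`
with `R_{[c,M,s]}(s) = 0`. -/
theorem statement9 [Nonempty X] [Nonempty Y] (c : X → Y → ℝ) (M : X → Set Y)
    (hM : (mapDom M).Nonempty) (hcyc : IsCCyclicallyMonotone c M)
    (s : X) (hs : s ∈ mapDom M) :
    ProperFn (rockafellar c M s) ∧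
      IsCConvex c (rockafellar c M s) ∧
      IsCAntiderivative c (rockafellar c M s) M ∧
      rockafellar c M s s = 0 :=
  statement9_general c M hcyc s hs
end
end
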